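/- arXiv:nlin/0103035 — 2 statements merged into one kernel-verified Lean document; each statement's English description precedes it below -/
import Mathlib

section
/- Variation of an advected density (the D′-equation). In the two-parameter family setup, suppose D : ℝⁿ × ℝ × ℝ → ℝ is smooth and satisfies D(φ(t,ε,x₀), t, ε) · det(D_{x₀}φ(t,ε,x₀)) = D₀(x₀) for all (t,ε,x₀), where D₀ : ℝⁿ → ℝ is smooth and D_{x₀}φ is the Jacobian of φ with respect to x₀. Then at every point (x,t,ε): ∂D/∂t + div(D u) = 0 and ∂D/∂ε + div(D ξ) = 0. -/
/-! Fix one parameter `s` (`t` or `ε`), with velocity field `w` (`u` or `ξ`). Differentiating the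
identity `D(φ_s x₀, s) · det Jφ_s(x₀) = D₀(x₀)` in `s` gives
`(∂ₛD + ∇D · w) det Jφ_s + D · ∂ₛ(det Jφ_s) = 0`. Since mixed partials of `φ` commute,
`∂ₛ Jφ_s = Jw(φ_s x₀) · Jφ_s`, so Jacobi's formula gives `∂ₛ(det Jφ_s) = div w · det Jφ_s`.
As `φ_s` has a differentiable right inverse, `det Jφ_s ≠ 0` cancels, and
`∇D · w + D div w = div (D w)`. -/

open scoped BigOperators

noncomputable section

/-- Jacobian matrix of a map `f : ℝⁿ → ℝⁿ` at `x`. -/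
def jacobian {n : ℕ} (f : (Fin n → ℝ) → (Fin n → ℝ)) (x : Fin n → ℝ) :
    Matrix (Fin n) (Fin n) ℝ :=
  fun i j => fderiv ℝ (fun y => f y i) x (Pi.single j 1)

namespace Matrix

variable {𝕜 ι : Type*} [NontriviallyNormedField 𝕜] [Fintype ι] [DecidableEq ι]

theorem hasDerivAt_det {A : 𝕜 → Matrix ι ι 𝕜} {A' : Matrix ι ι 𝕜} {t : 𝕜}
    (hA : ∀ i j, HasDerivAt (fun s => A s i j) (A' i j) t) :
    HasDerivAt (fun s => (A s).det) (∑ i, ((A t).updateRow i (A' i)).det) t := by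
  -- Leibniz formula for `Bᵀ`, so that updating row `i` changes exactly one factor per product.
  have hexp : ∀ B : Matrix ι ι 𝕜, B.det = ∑ σ : Equiv.Perm ι, (σ.sign : 𝕜) * ∏ i, B i (σ i) :=
    fun B => by rw [← det_transpose, det_apply']; rfl
  simp_rw [hexp]
  rw [Finset.sum_comm]
  refine HasDerivAt.fun_sum fun σ _ => ?_
  rw [← Finset.mul_sum]
  refine HasDerivAt.const_mul _ ?_
  convert HasDerivAt.fun_finsetProd (u := Finset.univ) fun i _ => hA i (σ i) using 1
  refine Finset.sum_congr rfl fun i _ => ?_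
  rw [← Finset.mul_prod_erase _ _ (Finset.mem_univ i), updateRow_self, smul_eq_mul, mul_comm]
  exact congrArg (· * _) <| Finset.prod_congr rfl fun j hj =>
    by rw [updateRow_ne (Finset.ne_of_mem_erase hj)]

theorem sum_det_updateRow_mul (M J : Matrix ι ι 𝕜) :
    ∑ i, (J.updateRow i ((M * J) i)).det = M.trace * J.det := by
  have hrow : ∀ i, (M * J) i = ∑ k, M i k • J k := fun i => by
    ext j; simp only [mul_apply, Finset.sum_apply, Pi.smul_apply, smul_eq_mul]
  simp_rw [hrow, det_updateRow_sum, trace, Finset.sum_mul]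
  rfl

end Matrix

theorem ContinuousLinearMap.apply_eq_sum_smul_single {ι R M : Type*} [Fintype ι]
    [DecidableEq ι] [CommSemiring R] [TopologicalSpace R] [AddCommMonoid M] [TopologicalSpace M]
    [Module R M] (L : (ι → R) →L[R] M) (v : ι → R) :
    L v = ∑ i, v i • L (Pi.single i 1) := by
  conv_lhs => rw [← Finset.univ_sum_single v]
  simp only [map_sum]
  refine Finset.sum_congr rfl fun i _ => ?_
  rw [← map_smul, ← Pi.single_smul', smul_eq_mul, mul_one]

section Partials

variable {E F : Type*} [NormedAddCommGroup E] [NormedSpace ℝ E] [NormedAddCommGroup F]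
  [NormedSpace ℝ F] {g : ℝ × E → F} {t : ℝ} {y : E}

theorem deriv_slice_eq_fderiv_apply (hg : DifferentiableAt ℝ g (t, y)) :
    deriv (fun s => g (s, y)) t = fderiv ℝ g (t, y) (1, 0) :=
  (hg.hasFDerivAt.comp_hasDerivAt t ((hasDerivAt_id' t).prodMk (hasDerivAt_const t y))).deriv

theorem fderiv_slice_eq_fderiv_comp_inr (hg : DifferentiableAt ℝ g (t, y)) :
    fderiv ℝ (fun z => g (t, z)) y = (fderiv ℝ g (t, y)).comp (.inr ℝ ℝ E) :=
  (hg.hasFDerivAt.comp y (hasFDerivAt_prodMk_right t y)).fderiv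

theorem DifferentiableAt.hasDerivAt_comp_prodMk {γ : ℝ → E} {γ' : E}
    (hg : DifferentiableAt ℝ g (t, γ t)) (hγ : HasDerivAt γ γ' t) :
    HasDerivAt (fun s => g (s, γ s))
      (deriv (fun s => g (s, γ t)) t + fderiv ℝ (fun z => g (t, z)) (γ t) γ') t := by
  have h := hg.hasFDerivAt.comp_hasDerivAt t ((hasDerivAt_id' t).prodMk hγ)
  rw [show ((1 : ℝ), γ') = (1, 0) + (0, γ') by simp, map_add] at h
  rwa [deriv_slice_eq_fderiv_apply hg, fderiv_slice_eq_fderiv_comp_inr hg,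
    ContinuousLinearMap.comp_apply, ContinuousLinearMap.inr_apply]

theorem ContDiff.hasDerivAt_fderiv_slice (hg : ContDiff ℝ 2 g) (t : ℝ) (y v : E) :
    HasDerivAt (fun s => fderiv ℝ (fun z => g (s, z)) y v)
      (fderiv ℝ (fun z => deriv (fun s => g (s, z)) t) y v) t := by
  have hg₁ : Differentiable ℝ g := hg.differentiable two_ne_zero
  have hg₂ : Differentiable ℝ (fderiv ℝ g) :=
    (hg.fderiv_right (m := 1) le_rfl).differentiable one_ne_zero
  have hcurve : HasDerivAt (fun s => fderiv ℝ g (s, y)) (fderiv ℝ (fderiv ℝ g) (t, y) (1, 0)) t :=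
    (hg₂ _).hasFDerivAt.comp_hasDerivAt t ((hasDerivAt_id' t).prodMk (hasDerivAt_const t y))
  have hslice : HasFDerivAt (fun z => fderiv ℝ g (t, z))
      ((fderiv ℝ (fderiv ℝ g) (t, y)).comp (.inr ℝ ℝ E)) y :=
    (hg₂ _).hasFDerivAt.comp y (hasFDerivAt_prodMk_right t y)
  have hsymm := (hg.contDiffAt (x := (t, y))).isSymmSndFDerivAt (by simp) (1, 0) (0, v)
  simp_rw [fun s z => fderiv_slice_eq_fderiv_comp_inr (t := s) (y := z) (hg₁ _),
    fun z => deriv_slice_eq_fderiv_apply (t := t) (y := z) (hg₁ _),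
    (hslice.clm_apply (hasFDerivAt_const _ y)).fderiv]
  simpa only [ContinuousLinearMap.comp_apply, ContinuousLinearMap.inr_apply,
    ContinuousLinearMap.comp_zero, zero_add, ContinuousLinearMap.flip_apply, hsymm, map_zero,
    add_zero] using hcurve.clm_apply (hasDerivAt_const t ((0 : ℝ), v))

end Partials

section Jacobian

variable {n : ℕ}

theorem jacobian_eq_toMatrix' {f : (Fin n → ℝ) → Fin n → ℝ} {x : Fin n → ℝ}
    (hf : DifferentiableAt ℝ f x) :
    jacobian f x = LinearMap.toMatrix' (fderiv ℝ f x : (Fin n → ℝ) →ₗ[ℝ] Fin n → ℝ) := by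
  ext i j
  simp [jacobian, LinearMap.toMatrix'_apply, fderiv_apply hf i]

theorem jacobian_comp {f g : (Fin n → ℝ) → Fin n → ℝ} {x : Fin n → ℝ}
    (hf : DifferentiableAt ℝ f (g x)) (hg : DifferentiableAt ℝ g x) :
    jacobian (f ∘ g) x = jacobian f (g x) * jacobian g x := by
  rw [jacobian_eq_toMatrix' (hf.comp x hg), jacobian_eq_toMatrix' hf, jacobian_eq_toMatrix' hg,
    fderiv_comp x hf hg, ← LinearMap.toMatrix'_mul]
  rfl

theorem det_jacobian_ne_zero_of_leftInverse {f g : (Fin n → ℝ) → Fin n → ℝ} {x : Fin n → ℝ}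
    (hf : DifferentiableAt ℝ f (g x)) (hg : DifferentiableAt ℝ g x)
    (hfg : Function.LeftInverse f g) : (jacobian f (g x)).det ≠ 0 := by
  have hid : jacobian (f ∘ g) x = 1 := by
    rw [hfg.comp_eq_id, jacobian_eq_toMatrix' differentiableAt_id, fderiv_id]
    exact LinearMap.toMatrix'_id
  have hdet := congrArg Matrix.det ((jacobian_comp hf hg).symm.trans hid)
  rw [Matrix.det_mul, Matrix.det_one] at hdet
  exact left_ne_zero_of_mul_eq_one hdet

def divergence (w : (Fin n → ℝ) → Fin n → ℝ) (x : Fin n → ℝ) : ℝ :=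
  (jacobian w x).trace

theorem divergence_smul {c : (Fin n → ℝ) → ℝ} {w : (Fin n → ℝ) → Fin n → ℝ} {x : Fin n → ℝ}
    (hc : DifferentiableAt ℝ c x) (hw : DifferentiableAt ℝ w x) :
    divergence (fun y => c y • w y) x = fderiv ℝ c x (w x) + c x * divergence w x := by
  have hwi : ∀ i, DifferentiableAt ℝ (fun y => w y i) x := fun i =>
    (differentiableAt_pi.1 hw) i
  simp only [divergence, jacobian, Matrix.trace, Matrix.diag, Pi.smul_apply, smul_eq_mul,
    fderiv_fun_mul hc (hwi _), add_apply, smul_apply]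
  rw [Finset.sum_add_distrib, ← Finset.mul_sum, add_comm,
    (fderiv ℝ c x).apply_eq_sum_smul_single (w x)]
  rfl

theorem hasDerivAt_jacobian_of_flow {ψ : ℝ → (Fin n → ℝ) → Fin n → ℝ}
    {w : (Fin n → ℝ) → Fin n → ℝ} {t : ℝ} {y : Fin n → ℝ}
    (hψ : ContDiff ℝ 2 (fun p : ℝ × (Fin n → ℝ) => ψ p.1 p.2))
    (hw : DifferentiableAt ℝ w (ψ t y))
    (hflow : ∀ z i, deriv (fun s => ψ s z i) t = w (ψ t z) i) (i j : Fin n) :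
    HasDerivAt (fun s => jacobian (ψ s) y i j)
      ((jacobian w (ψ t y) * jacobian (ψ t) y) i j) t := by
  have hψt : DifferentiableAt ℝ (ψ t) y :=
    (hψ.comp (contDiff_const.prodMk contDiff_id)).differentiable two_ne_zero y
  have hrate : (fun z => deriv (fun s => ψ s z i) t) = fun z => (w ∘ ψ t) z i :=
    funext fun z => hflow z i
  rw [← jacobian_comp hw hψt]
  have h := (contDiff_pi.1 hψ i).hasDerivAt_fderiv_slice t y (Pi.single j 1)
  rw [hrate] at h
  exact h

theorem continuity_equation_of_mass_conservation
    {ψ w : ℝ → (Fin n → ℝ) → Fin n → ℝ} {ρ : ℝ → (Fin n → ℝ) → ℝ} {t m : ℝ}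
    {x₀ : Fin n → ℝ}
    (hψ : ContDiff ℝ 2 (fun p : ℝ × (Fin n → ℝ) => ψ p.1 p.2))
    (hw : DifferentiableAt ℝ (w t) (ψ t x₀))
    (hρ : DifferentiableAt ℝ (fun p : ℝ × (Fin n → ℝ) => ρ p.1 p.2) (t, ψ t x₀))
    (hflow : ∀ z i, deriv (fun s => ψ s z i) t = w t (ψ t z) i)
    (hmass : ∀ s, ρ s (ψ s x₀) * (jacobian (ψ s) x₀).det = m)
    (hdet : (jacobian (ψ t) x₀).det ≠ 0) :
    deriv (fun s => ρ s (ψ t x₀)) t + divergence (fun y => ρ t y • w t y) (ψ t x₀) = 0 := by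
  set x := ψ t x₀
  have hjac : HasDerivAt (fun s => (jacobian (ψ s) x₀).det)
      ((jacobian (w t) x).trace * (jacobian (ψ t) x₀).det) t := by
    rw [← Matrix.sum_det_updateRow_mul]
    exact Matrix.hasDerivAt_det (hasDerivAt_jacobian_of_flow hψ hw hflow)
  have hpath : HasDerivAt (fun s => ψ s x₀) (w t x) t := by
    refine hasDerivAt_pi.2 fun i => ?_
    rw [← hflow x₀ i]
    exact ((contDiff_pi.1 hψ i).comp (contDiff_id.prodMk contDiff_const)).differentiable
      two_ne_zero t |>.hasDerivAt
  have hρpath : HasDerivAt (fun s => ρ s (ψ s x₀))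
      (deriv (fun s => ρ s x) t + fderiv ℝ (ρ t) x (w t x)) t :=
    hρ.hasDerivAt_comp_prodMk hpath
  have hconst : HasDerivAt (fun s => ρ s (ψ s x₀) * (jacobian (ψ s) x₀).det) 0 t := by
    simpa only [hmass] using hasDerivAt_const t m
  have hderiv := (hρpath.mul hjac).unique hconst
  have hρt : DifferentiableAt ℝ (ρ t) x :=
    hρ.comp x (hasFDerivAt_prodMk_right t x).differentiableAt
  rw [divergence_smul hρt hw]
  refine (mul_eq_zero.1 ?_).resolve_right hdet
  rw [← hderiv, divergence]
  ring

end Jacobian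

theorem advected_density_variation_general
    {n : ℕ}
    (φ η : ℝ → ℝ → (Fin n → ℝ) → (Fin n → ℝ))
    (u ξ : (Fin n → ℝ) → ℝ → ℝ → (Fin n → ℝ))
    (D : (Fin n → ℝ) → ℝ → ℝ → ℝ) (D₀ : (Fin n → ℝ) → ℝ)
    -- smoothness
    (hφ : ContDiff ℝ (⊤ : ℕ∞) (fun p : ℝ × ℝ × (Fin n → ℝ) => φ p.1 p.2.1 p.2.2))
    (hu : ContDiff ℝ (⊤ : ℕ∞) (fun p : (Fin n → ℝ) × ℝ × ℝ => u p.1 p.2.1 p.2.2))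
    (hξ : ContDiff ℝ (⊤ : ℕ∞) (fun p : (Fin n → ℝ) × ℝ × ℝ => ξ p.1 p.2.1 p.2.2))
    (hD : ContDiff ℝ (⊤ : ℕ∞) (fun p : (Fin n → ℝ) × ℝ × ℝ => D p.1 p.2.1 p.2.2))
    -- φ(t,ε,·) is a diffeomorphism of ℝⁿ for each (t,ε), with smooth inverse η(t,ε,·)
    (hη : ContDiff ℝ (⊤ : ℕ∞) (fun p : ℝ × ℝ × (Fin n → ℝ) => η p.1 p.2.1 p.2.2))
    (hφη : ∀ t ε x, φ t ε (η t ε x) = x)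
    -- ∂φ/∂t(t,ε,x₀) = u(φ(t,ε,x₀),t,ε)
    (hflow_t : ∀ t ε x₀ i, deriv (fun s => φ s ε x₀ i) t = u (φ t ε x₀) t ε i)
    -- ∂φ/∂ε(t,ε,x₀) = ξ(φ(t,ε,x₀),t,ε)
    (hflow_ε : ∀ t ε x₀ i, deriv (fun e => φ t e x₀ i) ε = ξ (φ t ε x₀) t ε i)
    -- mass conservation : D(φ(t,ε,x₀),t,ε)·det(D_{x₀}φ(t,ε,x₀)) = D₀(x₀)
    (hmass : ∀ t ε x₀, D (φ t ε x₀) t ε * (jacobian (φ t ε) x₀).det = D₀ x₀) :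
    ∀ x t ε,
      deriv (fun s => D x s ε) t
          + ∑ i, fderiv ℝ (fun y => D y t ε * u y t ε i) x (Pi.single i 1) = 0
      ∧ deriv (fun e => D x t e) ε
          + ∑ i, fderiv ℝ (fun y => D y t ε * ξ y t ε i) x (Pi.single i 1) = 0 := by
  intro x t ε
  have hφ₂ := contDiff_infty.1 hφ 2
  have hdet : (jacobian (φ t ε) (η t ε x)).det ≠ 0 :=
    det_jacobian_ne_zero_of_leftInverse
      ((hφ₂.comp (contDiff_const.prodMk (contDiff_const.prodMk contDiff_id))).differentiable
        two_ne_zero _)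
      (((contDiff_infty.1 hη 1).comp
        (contDiff_const.prodMk (contDiff_const.prodMk contDiff_id))).differentiable one_ne_zero _)
      (hφη t ε)
  rw [← hφη t ε x]
  -- `divergence (fun y => D y • u y)` unfolds to the sums in the goal.
  constructor
  · exact continuity_equation_of_mass_conservation (ψ := fun s => φ s ε)
      (w := fun s y => u y s ε) (ρ := fun s y => D y s ε)
      (hφ₂.comp (contDiff_fst.prodMk (contDiff_const.prodMk contDiff_snd)))
      (((contDiff_infty.1 hu 1).comp
        (contDiff_id.prodMk (contDiff_const (c := (t, ε))))).differentiable one_ne_zero _)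
      (((contDiff_infty.1 hD 1).comp
        (contDiff_snd.prodMk (contDiff_fst.prodMk contDiff_const))).differentiable one_ne_zero _)
      (hflow_t t ε) (hmass · ε _) hdet
  · exact continuity_equation_of_mass_conservation (ψ := fun e => φ t e)
      (w := fun e y => ξ y t e) (ρ := fun e y => D y t e)
      (hφ₂.comp (contDiff_const.prodMk contDiff_id))
      (((contDiff_infty.1 hξ 1).comp
        (contDiff_id.prodMk (contDiff_const (c := (t, ε))))).differentiable one_ne_zero _)
      (((contDiff_infty.1 hD 1).comp
        (contDiff_snd.prodMk (contDiff_const.prodMk contDiff_fst))).differentiable one_ne_zero _)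
      (hflow_ε t ε) (hmass t · _) hdet

/-- **Variation of an advected density (the D′-equation).**
If `D(φ(t,ε,x₀),t,ε) · det(D_{x₀}φ(t,ε,x₀)) = D₀(x₀)` for a smooth two-parameter
family of diffeomorphisms `φ` with `∂φ/∂t = u(φ,t,ε)` and `∂φ/∂ε = ξ(φ,t,ε)`, then
at every point: `∂D/∂t + div(D u) = 0` and `∂D/∂ε + div(D ξ) = 0`. -/
theorem advected_density_variation
    {n : ℕ}
    (φ η : ℝ → ℝ → (Fin n → ℝ) → (Fin n → ℝ))
    (u ξ : (Fin n → ℝ) → ℝ → ℝ → (Fin n → ℝ))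
    (D : (Fin n → ℝ) → ℝ → ℝ → ℝ) (D₀ : (Fin n → ℝ) → ℝ)
    -- smoothness
    (hφ : ContDiff ℝ (⊤ : ℕ∞) (fun p : ℝ × ℝ × (Fin n → ℝ) => φ p.1 p.2.1 p.2.2))
    (hu : ContDiff ℝ (⊤ : ℕ∞) (fun p : (Fin n → ℝ) × ℝ × ℝ => u p.1 p.2.1 p.2.2))
    (hξ : ContDiff ℝ (⊤ : ℕ∞) (fun p : (Fin n → ℝ) × ℝ × ℝ => ξ p.1 p.2.1 p.2.2))
    (hD : ContDiff ℝ (⊤ : ℕ∞) (fun p : (Fin n → ℝ) × ℝ × ℝ => D p.1 p.2.1 p.2.2))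
    (hD₀ : ContDiff ℝ (⊤ : ℕ∞) D₀)
    -- φ(t,ε,·) is a diffeomorphism of ℝⁿ for each (t,ε), with smooth inverse η(t,ε,·)
    (hη : ContDiff ℝ (⊤ : ℕ∞) (fun p : ℝ × ℝ × (Fin n → ℝ) => η p.1 p.2.1 p.2.2))
    (hφη : ∀ t ε x, φ t ε (η t ε x) = x)
    (hηφ : ∀ t ε x, η t ε (φ t ε x) = x)
    -- ∂φ/∂t(t,ε,x₀) = u(φ(t,ε,x₀),t,ε)
    (hflow_t : ∀ t ε x₀ i, deriv (fun s => φ s ε x₀ i) t = u (φ t ε x₀) t ε i)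
    -- ∂φ/∂ε(t,ε,x₀) = ξ(φ(t,ε,x₀),t,ε)
    (hflow_ε : ∀ t ε x₀ i, deriv (fun e => φ t e x₀ i) ε = ξ (φ t ε x₀) t ε i)
    -- mass conservation : D(φ(t,ε,x₀),t,ε)·det(D_{x₀}φ(t,ε,x₀)) = D₀(x₀)
    (hmass : ∀ t ε x₀, D (φ t ε x₀) t ε * (jacobian (φ t ε) x₀).det = D₀ x₀) :
    ∀ x t ε,
      deriv (fun s => D x s ε) t
          + ∑ i, fderiv ℝ (fun y => D y t ε * u y t ε i) x (Pi.single i 1) = 0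
      ∧ deriv (fun e => D x t e) ε
          + ∑ i, fderiv ℝ (fun y => D y t ε * ξ y t ε i) x (Pi.single i 1) = 0 :=
  advected_density_variation_general φ η u ξ D D₀ hφ hu hξ hD hη hφη hflow_t hflow_ε hmass
end
end

section
/- Kelvin–Noether circulation theorem with thermodynamic source, and the generalized Charney–Drazin corollary. Let γ₀ : [0,1] → ℝⁿ be a smooth loop with γ₀(0) = γ₀(1), and let v, as well as scalar functions h, T, s on ℝⁿ × ℝ, be smooth and satisfy the motion equation ∂ₜv + (u·∇)v + v_j∇u^j = ∇h + T∇s everywhere. Then the circulation I(t) := ∫₀¹ v(φ(t, γ₀(s)), t) · ∂ₛ[φ(t, γ₀(s))] ds satisfies I′(t) = ∫₀¹ (T∇s)(φ(t, γ₀(s)), t) · ∂ₛ[φ(t, γ₀(s))] ds for all t; in particular, if T∇s vanishes identically (the barotropic/isentropic case) then I(t) is constant in t. -/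
/-!
Write `Φ(τ, s) = φ(τ, γ₀ s)` and `W = ∂ₛΦ`. Since `∂_τ Φ = u ∘ Φ`, the symmetry of mixed partials
gives `∂_τ W = (Du) W`, so by the chain rule `∂_τ (v · W) = (∂ₜv + (u·∇)v) · W + v · (Du) W`, which
is `EPop u v · W`: the term `v_j ∇u^j` of the operator is exactly what the stretching of `W`
contributes. Under the motion equation the `τ`-derivative of the integrand is therefore
`∂ₛ[h(Φ, τ)] + T∇s · W`, and the first term integrates to zero around the closed loop.
Differentiating under the integral sign gives `I′`.
-/

open scoped BigOperators

noncomputable section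

/-- The Euler–Poincaré transport operator
`[∂ₜv + (u·∇)v + v_j ∇u^j]ᵢ` evaluated at `(x,t)`. -/
def EPop {n : ℕ} (u v : (Fin n → ℝ) → ℝ → (Fin n → ℝ))
    (x : Fin n → ℝ) (t : ℝ) : Fin n → ℝ :=
  fun i =>
    deriv (fun s => v x s i) t
      + fderiv ℝ (fun y => v y t i) x (u x t)
      + ∑ j, v x t j * fderiv ℝ (fun y => u y t j) x (Pi.single i 1)

/-- Spatial gradient of a time-dependent scalar field. -/
def grad {n : ℕ} (f : (Fin n → ℝ) → ℝ → ℝ) (x : Fin n → ℝ) (t : ℝ) : Fin n → ℝ :=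
  fun i => fderiv ℝ (fun y => f y t) x (Pi.single i 1)

open MeasureTheory

section Calculus

variable {E F : Type*} [NormedAddCommGroup E] [NormedSpace ℝ E]
  [NormedAddCommGroup F] [NormedSpace ℝ F]

theorem ContinuousLinearMap.apply_eq_sum_single {ι : Type*} [Fintype ι] [DecidableEq ι]
    (L : (ι → ℝ) →L[ℝ] ℝ) (w : ι → ℝ) : L w = ∑ j, L (Pi.single j 1) * w j := by
  conv_lhs => rw [← Finset.univ_sum_single w, map_sum]
  refine Finset.sum_congr rfl fun j _ => ?_
  rw [show Pi.single j (w j) = w j • (Pi.single j 1 : ι → ℝ) by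
    rw [← Pi.single_smul', smul_eq_mul, mul_one], map_smul, smul_eq_mul,
    mul_comm]

theorem DifferentiableAt.hasDerivAt_comp_prodMk_left {f : ℝ × ℝ → E} {t s : ℝ}
    (hf : DifferentiableAt ℝ f (t, s)) :
    HasDerivAt (fun τ => f (τ, s)) (fderiv ℝ f (t, s) (1, 0)) t :=
  hf.hasFDerivAt.comp_hasDerivAt t ((hasDerivAt_id t).prodMk (hasDerivAt_const t s))

theorem DifferentiableAt.hasDerivAt_comp_prodMk_right {f : ℝ × ℝ → E} {t s : ℝ}
    (hf : DifferentiableAt ℝ f (t, s)) :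
    HasDerivAt (fun r => f (t, r)) (fderiv ℝ f (t, s) (0, 1)) s :=
  hf.hasFDerivAt.comp_hasDerivAt s ((hasDerivAt_const s t).prodMk (hasDerivAt_id s))

theorem hasDerivAt_comp_curve {g : E → ℝ → F} {c : ℝ → E} {c' : E} {t : ℝ}
    (hg : DifferentiableAt ℝ (fun p : E × ℝ => g p.1 p.2) (c t, t)) (hc : HasDerivAt c c' t) :
    HasDerivAt (fun τ => g (c τ) τ)
      (fderiv ℝ (fun y => g y t) (c t) c' + deriv (fun σ => g (c t) σ) t) t := by
  have hspace : HasFDerivAt (fun y => g y t)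
      ((fderiv ℝ (fun p : E × ℝ => g p.1 p.2) (c t, t)).comp (ContinuousLinearMap.inl ℝ E ℝ))
      (c t) :=
    hg.hasFDerivAt.comp (f := fun y => (y, t)) (c t) (hasFDerivAt_prodMk_left (c t) t)
  have htime : HasDerivAt (fun σ => g (c t) σ)
      (fderiv ℝ (fun p : E × ℝ => g p.1 p.2) (c t, t) (0, 1)) t :=
    hg.hasFDerivAt.comp_hasDerivAt t ((hasDerivAt_const t (c t)).prodMk (hasDerivAt_id t))
  have htotal :=
    hg.hasFDerivAt.comp_hasDerivAt (f := fun τ => (c τ, τ)) t (hc.prodMk (hasDerivAt_id t))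
  rw [hspace.fderiv, htime.deriv, ContinuousLinearMap.comp_apply, ContinuousLinearMap.inl_apply,
    ← map_add, Prod.mk_add_mk, add_zero, zero_add]
  exact htotal

theorem hasDerivAt_deriv_snd_of_contDiff {Φ : ℝ × ℝ → E} (hΦ : ContDiff ℝ 2 Φ) (t s : ℝ) :
    HasDerivAt (fun τ => deriv (fun r => Φ (τ, r)) s)
      (deriv (fun r => deriv (fun σ => Φ (σ, r)) t) s) t := by
  have hd : Differentiable ℝ Φ := hΦ.differentiable two_ne_zero
  have hdd : Differentiable ℝ (fderiv ℝ Φ) :=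
    (hΦ.fderiv_right (m := 1) le_rfl).differentiable one_ne_zero
  have hsnd : ∀ τ, deriv (fun r => Φ (τ, r)) s = fderiv ℝ Φ (τ, s) (0, 1) :=
    fun τ => (hd _).hasDerivAt_comp_prodMk_right.deriv
  have hfst : ∀ r, deriv (fun σ => Φ (σ, r)) t = fderiv ℝ Φ (t, r) (1, 0) :=
    fun r => (hd _).hasDerivAt_comp_prodMk_left.deriv
  have hτ : HasDerivAt (fun τ => fderiv ℝ Φ (τ, s) (0, 1))
      (fderiv ℝ (fderiv ℝ Φ) (t, s) (1, 0) (0, 1)) t :=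
    (ContinuousLinearMap.apply ℝ E ((0 : ℝ), (1 : ℝ))).hasFDerivAt.comp_hasDerivAt t
      (hdd _).hasDerivAt_comp_prodMk_left
  have hr : HasDerivAt (fun r => fderiv ℝ Φ (t, r) (1, 0))
      (fderiv ℝ (fderiv ℝ Φ) (t, s) (0, 1) (1, 0)) s :=
    (ContinuousLinearMap.apply ℝ E ((1 : ℝ), (0 : ℝ))).hasFDerivAt.comp_hasDerivAt s
      (hdd _).hasDerivAt_comp_prodMk_right
  have hsymm : fderiv ℝ (fderiv ℝ Φ) (t, s) (1, 0) (0, 1)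
      = fderiv ℝ (fderiv ℝ Φ) (t, s) (0, 1) (1, 0) :=
    hΦ.contDiffAt.isSymmSndFDerivAt (by simp [minSmoothness_of_isRCLikeNormedField]) _ _
  simp only [hsnd, hfst, hr.deriv, ← hsymm]
  exact hτ

theorem hasDerivAt_intervalIntegral_of_contDiff [CompleteSpace E] {G : ℝ × ℝ → E}
    (hG : ContDiff ℝ 1 G) (a b t : ℝ) :
    HasDerivAt (fun τ => ∫ s in a..b, G (τ, s))
      (∫ s in a..b, deriv (fun σ => G (σ, s)) t) t := by
  have hG' : Continuous fun p => fderiv ℝ G p (1, 0) :=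
    (hG.continuous_fderiv one_ne_zero).clm_apply continuous_const
  have hpartial : ∀ p : ℝ × ℝ, HasDerivAt (fun σ => G (σ, p.2)) (fderiv ℝ G p (1, 0)) p.1 :=
    fun p => (hG.differentiable one_ne_zero p).hasDerivAt_comp_prodMk_left
  obtain ⟨C, hC⟩ : ∃ C, ∀ p ∈ Metric.closedBall t 1 ×ˢ Set.uIcc a b, ‖fderiv ℝ G p (1, 0)‖ ≤ C :=
    ((isCompact_closedBall t 1).prod isCompact_uIcc).exists_bound_of_continuousOn
      hG'.continuousOn
  have hslice : ∀ τ, Continuous fun s => G (τ, s) := fun τ => hG.continuous.comp (.prodMk_right τ)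
  have hderiv := intervalIntegral.hasDerivAt_integral_of_dominated_loc_of_deriv_le
    (μ := volume) (F' := fun τ s => fderiv ℝ G (τ, s) (1, 0)) (bound := fun _ => C)
    (Metric.closedBall_mem_nhds t one_pos)
    (.of_forall fun τ => (hslice τ).aestronglyMeasurable) ((hslice t).intervalIntegrable a b)
    (hG'.comp (.prodMk_right t)).aestronglyMeasurable
    (.of_forall fun s hs τ hτ => hC (τ, s) ⟨hτ, Set.uIoc_subset_uIcc hs⟩)
    intervalIntegrable_const (.of_forall fun s _ τ _ => hpartial (τ, s))
  simpa only [fun s => (hpartial (t, s)).deriv] using hderiv.2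

/-- No integrability of `g` is needed: otherwise `f + g` is not integrable either, and both
integrals take the junk value `0`. -/
theorem intervalIntegral.integral_add_eq_right {f g : ℝ → E} {a b : ℝ}
    (hf : IntervalIntegrable f volume a b) (hf0 : ∫ x in a..b, f x = 0) :
    ∫ x in a..b, (f x + g x) = ∫ x in a..b, g x := by
  by_cases hg : IntervalIntegrable g volume a b
  · rw [intervalIntegral.integral_add hf hg, hf0, zero_add]
  · have hfg : ¬IntervalIntegrable (fun x => f x + g x) volume a b := fun hfg =>
      hg (by simpa using hfg.sub hf)
    rw [intervalIntegral.integral_undef hfg, intervalIntegral.integral_undef hg]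

theorem hasDerivAt_deriv_snd_of_flow {u : E → ℝ → E} {Φ : ℝ × ℝ → E} (hΦ : ContDiff ℝ 2 Φ)
    (hflow : ∀ τ s, HasDerivAt (fun σ => Φ (σ, s)) (u (Φ (τ, s)) τ) τ) {t s : ℝ}
    (hu : DifferentiableAt ℝ (fun y => u y t) (Φ (t, s))) :
    HasDerivAt (fun τ => deriv (fun r => Φ (τ, r)) s)
      (fderiv ℝ (fun y => u y t) (Φ (t, s)) (deriv (fun r => Φ (t, r)) s)) t := by
  have hslice : DifferentiableAt ℝ (fun r => Φ (t, r)) s :=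
    (hΦ.differentiable two_ne_zero (t, s)).hasDerivAt_comp_prodMk_right.differentiableAt
  have hchain : HasDerivAt (fun r => u (Φ (t, r)) t)
      (fderiv ℝ (fun y => u y t) (Φ (t, s)) (deriv (fun r => Φ (t, r)) s)) s :=
    hu.hasFDerivAt.comp_hasDerivAt (l := fun y => u y t) s hslice.hasDerivAt
  have hmixed := hasDerivAt_deriv_snd_of_contDiff hΦ t s
  simp only [fun r => (hflow t r).deriv, hchain.deriv] at hmixed
  exact hmixed

end Calculus

section Circulation

variable {n : ℕ} {u v : (Fin n → ℝ) → ℝ → (Fin n → ℝ)}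

theorem fderiv_apply_eq_sum_grad (f : (Fin n → ℝ) → ℝ → ℝ) (x : Fin n → ℝ) (t : ℝ)
    (w : Fin n → ℝ) : fderiv ℝ (fun y => f y t) x w = ∑ i, grad f x t i * w i :=
  ContinuousLinearMap.apply_eq_sum_single _ w

theorem hasDerivAt_sum_mul_of_lie_transport {c W : ℝ → Fin n → ℝ} {t : ℝ}
    (hu : DifferentiableAt ℝ (fun y => u y t) (c t))
    (hv : DifferentiableAt ℝ (fun p : (Fin n → ℝ) × ℝ => v p.1 p.2) (c t, t))
    (hc : HasDerivAt c (u (c t) t) t)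
    (hW : HasDerivAt W (fderiv ℝ (fun y => u y t) (c t) (W t)) t) :
    HasDerivAt (fun τ => ∑ i, v (c τ) τ i * W τ i) (∑ i, EPop u v (c t) t i * W t i) t := by
  set x := c t
  have hv_i (i : Fin n) : HasDerivAt (fun τ => v (c τ) τ i)
      (fderiv ℝ (fun y => v y t i) x (u x t) + deriv (fun σ => v x σ i) t) t :=
    hasDerivAt_comp_curve (g := fun y σ => v y σ i) (differentiableAt_pi.1 hv i) hc
  have hW_i (i : Fin n) : HasDerivAt (fun τ => W τ i)
      (∑ j, fderiv ℝ (fun y => u y t i) x (Pi.single j 1) * W t j) t := by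
    rw [← ContinuousLinearMap.apply_eq_sum_single, (hasFDerivAt_pi'.1 hu.hasFDerivAt i).fderiv]
    exact hasDerivAt_pi.1 hW i
  refine (HasDerivAt.fun_sum fun i _ => (hv_i i).mul (hW_i i)).congr_deriv ?_
  have hswap : ∑ i, v x t i * ∑ j, fderiv ℝ (fun y => u y t i) x (Pi.single j 1) * W t j
      = ∑ i, (∑ j, v x t j * fderiv ℝ (fun y => u y t j) x (Pi.single i 1)) * W t i := by
    simp only [Finset.mul_sum, Finset.sum_mul]
    rw [Finset.sum_comm]
    exact Finset.sum_congr rfl fun i _ => Finset.sum_congr rfl fun j _ => by ring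
  rw [Finset.sum_add_distrib, hswap, ← Finset.sum_add_distrib]
  exact Finset.sum_congr rfl fun i _ => by simp only [EPop]; ring

theorem hasDerivAt_circulation {Φ : ℝ × ℝ → Fin n → ℝ}
    (hu : ∀ t, Differentiable ℝ (fun y => u y t))
    (hv : ContDiff ℝ 1 (fun p : (Fin n → ℝ) × ℝ => v p.1 p.2)) (hΦ : ContDiff ℝ 2 Φ)
    (hflow : ∀ τ s, HasDerivAt (fun σ => Φ (σ, s)) (u (Φ (τ, s)) τ) τ) (a b t : ℝ) :
    HasDerivAt (fun τ => ∫ s in a..b, ∑ i, v (Φ (τ, s)) τ i * deriv (fun r => Φ (τ, r)) s i)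
      (∫ s in a..b, ∑ i, EPop u v (Φ (t, s)) t i * deriv (fun r => Φ (t, r)) s i) t := by
  have htangent : ∀ p : ℝ × ℝ, deriv (fun r => Φ (p.1, r)) p.2 = fderiv ℝ Φ p (0, 1) :=
    fun p => (hΦ.differentiable two_ne_zero p).hasDerivAt_comp_prodMk_right.deriv
  have hdensity : ContDiff ℝ 1
      (fun p : ℝ × ℝ => ∑ i, v (Φ p) p.1 i * deriv (fun r => Φ (p.1, r)) p.2 i) := by
    simp only [htangent]
    refine ContDiff.sum fun i _ => ?_
    exact (contDiff_pi.1 (hv.comp ((hΦ.of_le one_le_two).prodMk contDiff_fst)) i).mul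
      (contDiff_pi.1 ((hΦ.fderiv_right le_rfl).clm_apply contDiff_const) i)
  refine (hasDerivAt_intervalIntegral_of_contDiff hdensity a b t).congr_deriv
    (intervalIntegral.integral_congr fun s _ => ?_)
  exact (hasDerivAt_sum_mul_of_lie_transport (hu t _) (hv.differentiable one_ne_zero _)
    (hflow t s) (hasDerivAt_deriv_snd_of_flow hΦ hflow (hu t _))).deriv

theorem hasDerivAt_comp_sum_grad_mul {h : (Fin n → ℝ) → ℝ → ℝ} {c : ℝ → Fin n → ℝ}
    {s t : ℝ} (hh : DifferentiableAt ℝ (fun y => h y t) (c s)) (hc : DifferentiableAt ℝ c s) :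
    HasDerivAt (fun r => h (c r) t) (∑ i, grad h (c s) t i * deriv c s i) s := by
  rw [← fderiv_apply_eq_sum_grad]
  exact hh.hasFDerivAt.comp_hasDerivAt s hc.hasDerivAt

theorem integral_sum_grad_add_mul_deriv_of_loop {h : (Fin n → ℝ) → ℝ → ℝ}
    {c w : ℝ → Fin n → ℝ} {a b t : ℝ} (hh : ContDiff ℝ 1 (fun y => h y t))
    (hc : ContDiff ℝ 1 c) (hloop : c a = c b) :
    ∫ s in a..b, ∑ i, (grad h (c s) t i + w s i) * deriv c s i
      = ∫ s in a..b, ∑ i, w s i * deriv c s i := by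
  have hchain : ∀ s, deriv (fun r => h (c r) t) s = ∑ i, grad h (c s) t i * deriv c s i :=
    fun s => (hasDerivAt_comp_sum_grad_mul (hh.differentiable one_ne_zero _)
      (hc.differentiable one_ne_zero s)).deriv
  have hhc : ContDiff ℝ 1 (fun r => h (c r) t) := hh.comp hc
  simp only [add_mul, Finset.sum_add_distrib, ← hchain]
  refine intervalIntegral.integral_add_eq_right
    ((hhc.continuous_deriv le_rfl).intervalIntegrable a b) ?_
  rw [intervalIntegral.integral_deriv_of_contDiffOn_uIcc hhc.contDiffOn, hloop, sub_self]

end Circulation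

theorem kelvin_noether_with_source_general
    {n : ℕ}
    (u v : (Fin n → ℝ) → ℝ → (Fin n → ℝ))
    (h T ent : (Fin n → ℝ) → ℝ → ℝ)
    (φ : ℝ → (Fin n → ℝ) → (Fin n → ℝ))
    (γ₀ : ℝ → (Fin n → ℝ))
    -- smoothness
    (hu : ContDiff ℝ (⊤ : ℕ∞) (fun p : (Fin n → ℝ) × ℝ => u p.1 p.2))
    (hv : ContDiff ℝ (⊤ : ℕ∞) (fun p : (Fin n → ℝ) × ℝ => v p.1 p.2))
    (hh : ContDiff ℝ (⊤ : ℕ∞) (fun p : (Fin n → ℝ) × ℝ => h p.1 p.2))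
    (hφ : ContDiff ℝ (⊤ : ℕ∞) (fun p : ℝ × (Fin n → ℝ) => φ p.1 p.2))
    (hγ : ContDiff ℝ (⊤ : ℕ∞) γ₀)
    -- γ₀ is a loop
    (hloop : γ₀ 0 = γ₀ 1)
    -- φ is the flow map of u
    (hflow : ∀ t x₀ i, deriv (fun s => φ s x₀ i) t = u (φ t x₀) t i)
    -- motion equation : ∂ₜv + (u·∇)v + v_j∇u^j = ∇h + T∇s
    (hmotion : ∀ x t i,
      EPop u v x t i = grad h x t i + T x t * grad ent x t i) :
    -- conclusion : I′(t) = ∮ (T∇s)·dx, and if T∇s ≡ 0 then I is constant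
    (∀ t,
      HasDerivAt
        (fun τ => ∫ s in (0:ℝ)..1,
          ∑ i, v (φ τ (γ₀ s)) τ i * deriv (fun r => φ τ (γ₀ r) i) s)
        (∫ s in (0:ℝ)..1,
          ∑ i, T (φ t (γ₀ s)) t * grad ent (φ t (γ₀ s)) t i
            * deriv (fun r => φ t (γ₀ r) i) s)
        t)
    ∧ ((∀ x t i, T x t * grad ent x t i = 0) →
        ∀ t₁ t₂,
          (∫ s in (0:ℝ)..1,
            ∑ i, v (φ t₁ (γ₀ s)) t₁ i * deriv (fun r => φ t₁ (γ₀ r) i) s)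
          = ∫ s in (0:ℝ)..1,
            ∑ i, v (φ t₂ (γ₀ s)) t₂ i * deriv (fun r => φ t₂ (γ₀ r) i) s) := by
  have hsmooth : ((⊤ : ℕ∞) : WithTop ℕ∞) ≠ 0 := by simp
  set Φ : ℝ × ℝ → Fin n → ℝ := fun p => φ p.1 (γ₀ p.2)
  have hΦ : ContDiff ℝ (⊤ : ℕ∞) Φ := hφ.comp (contDiff_fst.prodMk (hγ.comp contDiff_snd))
  have hslice (τ : ℝ) : ContDiff ℝ 1 fun r => Φ (τ, r) :=
    contDiff_infty.1 (hΦ.comp (contDiff_const.prodMk contDiff_id)) 1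
  have hvel (τ s : ℝ) : HasDerivAt (fun σ => Φ (σ, s)) (u (Φ (τ, s)) τ) τ := by
    refine hasDerivAt_pi.2 fun i => ?_
    have hdiff : Differentiable ℝ fun σ => Φ (σ, s) i :=
      ((contDiff_pi.1 hΦ i).comp (contDiff_id.prodMk contDiff_const)).differentiable hsmooth
    rw [← hflow]
    exact (hdiff τ).hasDerivAt
  have hderiv (t : ℝ) : HasDerivAt
      (fun τ => ∫ s in (0:ℝ)..1, ∑ i, v (Φ (τ, s)) τ i * deriv (fun r => Φ (τ, r)) s i)
      (∫ s in (0:ℝ)..1,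
        ∑ i, T (Φ (t, s)) t * grad ent (Φ (t, s)) t i * deriv (fun r => Φ (t, r)) s i) t := by
    have hcirc := hasDerivAt_circulation (u := u)
      (fun t => (hu.comp (contDiff_id.prodMk contDiff_const)).differentiable hsmooth)
      (contDiff_infty.1 hv 1) (contDiff_infty.1 hΦ 2) hvel 0 1 t
    simp only [hmotion] at hcirc
    rwa [integral_sum_grad_add_mul_deriv_of_loop (h := h)
      (contDiff_infty.1 (hh.comp (contDiff_id.prodMk contDiff_const)) 1) (hslice t)
      (congrArg (φ t) hloop)] at hcirc
  have hcomponent (τ s : ℝ) (i : Fin n) :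
      deriv (fun r => φ τ (γ₀ r) i) s = deriv (fun r => Φ (τ, r)) s i :=
    (hasDerivAt_pi.1 ((hslice τ).differentiable one_ne_zero s).hasDerivAt i).deriv
  simp only [hcomponent]
  refine ⟨hderiv, fun hsource t₁ t₂ => ?_⟩
  have hconst (t : ℝ) := hderiv t
  simp only [hsource, zero_mul, Finset.sum_const_zero, intervalIntegral.integral_zero] at hconst
  exact is_const_of_deriv_eq_zero (fun t => (hconst t).differentiableAt)
    (fun t => (hconst t).deriv) t₁ t₂

/-- **Kelvin–Noether circulation theorem with thermodynamic source, and the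
generalized Charney–Drazin corollary.**  If `∂ₜv + (u·∇)v + v_j∇u^j = ∇h + T∇s`,
then the circulation `I(t)` around a material loop satisfies
`I′(t) = ∮ T∇s · dx`; in particular if `T∇s ≡ 0` then `I` is constant. -/
theorem kelvin_noether_with_source
    {n : ℕ}
    (u v : (Fin n → ℝ) → ℝ → (Fin n → ℝ))
    (h T ent : (Fin n → ℝ) → ℝ → ℝ)
    (φ : ℝ → (Fin n → ℝ) → (Fin n → ℝ))
    (γ₀ : ℝ → (Fin n → ℝ))
    -- smoothness
    (hu : ContDiff ℝ (⊤ : ℕ∞) (fun p : (Fin n → ℝ) × ℝ => u p.1 p.2))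
    (hv : ContDiff ℝ (⊤ : ℕ∞) (fun p : (Fin n → ℝ) × ℝ => v p.1 p.2))
    (hh : ContDiff ℝ (⊤ : ℕ∞) (fun p : (Fin n → ℝ) × ℝ => h p.1 p.2))
    (hT : ContDiff ℝ (⊤ : ℕ∞) (fun p : (Fin n → ℝ) × ℝ => T p.1 p.2))
    (hent : ContDiff ℝ (⊤ : ℕ∞) (fun p : (Fin n → ℝ) × ℝ => ent p.1 p.2))
    (hφ : ContDiff ℝ (⊤ : ℕ∞) (fun p : ℝ × (Fin n → ℝ) => φ p.1 p.2))
    (hγ : ContDiff ℝ (⊤ : ℕ∞) γ₀)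
    -- γ₀ is a loop
    (hloop : γ₀ 0 = γ₀ 1)
    -- φ is the flow map of u
    (hflow : ∀ t x₀ i, deriv (fun s => φ s x₀ i) t = u (φ t x₀) t i)
    (hinit : ∀ x₀, φ 0 x₀ = x₀)
    -- motion equation : ∂ₜv + (u·∇)v + v_j∇u^j = ∇h + T∇s
    (hmotion : ∀ x t i,
      EPop u v x t i = grad h x t i + T x t * grad ent x t i) :
    -- conclusion : I′(t) = ∮ (T∇s)·dx, and if T∇s ≡ 0 then I is constant
    (∀ t,
      HasDerivAt
        (fun τ => ∫ s in (0:ℝ)..1,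
          ∑ i, v (φ τ (γ₀ s)) τ i * deriv (fun r => φ τ (γ₀ r) i) s)
        (∫ s in (0:ℝ)..1,
          ∑ i, T (φ t (γ₀ s)) t * grad ent (φ t (γ₀ s)) t i
            * deriv (fun r => φ t (γ₀ r) i) s)
        t)
    ∧ ((∀ x t i, T x t * grad ent x t i = 0) →
        ∀ t₁ t₂,
          (∫ s in (0:ℝ)..1,
            ∑ i, v (φ t₁ (γ₀ s)) t₁ i * deriv (fun r => φ t₁ (γ₀ r) i) s)
          = ∫ s in (0:ℝ)..1,
            ∑ i, v (φ t₂ (γ₀ s)) t₂ i * deriv (fun r => φ t₂ (γ₀ r) i) s) :=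
  kelvin_noether_with_source_general u v h T ent φ γ₀ hu hv hh hφ hγ hloop hflow hmotion
end
end
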